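/- Let h : ℝ → ℝ be smooth with h(0) = 0 and h'(0) = 0 (a boundary curve given locally as the graph x₂ = h(x₁), tangent to the horizontal axis at the origin, bounding the region above the graph with outward unnormalized normal n(ξ) = (h'(ξ), -1)), and let μ : ℝ → ℝ be smooth with compact support. For δ > 0, define the on-surface local double layer heat potential at the origin by D_L(δ) = ∫_0^δ ∫_ℝ ((h(ξ) - ξ·h'(ξ))/(2t)) · exp(-(ξ² + h(ξ)²)/(4t))/(4πt) · μ(ξ) dξ dt. Then there exist constants C > 0 and δ₀ > 0 such that for all 0 < δ ≤ δ₀, | D_L(δ) + √δ·h''(0)·μ(0)/(2√π) | ≤ C·δ^{3/2}. -/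

import Mathlib

open MeasureTheory
open Real Filter Set

private lemma mvt_step {f f' : ℝ → ℝ} (hd : ∀ x, HasDerivAt f (f' x) x) (hf0 : f 0 = 0)
    {C r : ℝ} (hC : 0 ≤ C) (k : ℕ)
    (hb : ∀ u : ℝ, |u| ≤ r → |f' u| ≤ C * |u| ^ k) :
    ∀ ξ : ℝ, |ξ| ≤ r → |f ξ| ≤ C * |ξ| ^ (k + 1) := by
  intro ξ hξ
  have habs : ∀ u : ℝ, u ∈ Icc (min 0 ξ) (max 0 ξ) → |u| ≤ |ξ| := by
    intro u hu
    rcases le_total 0 ξ with hs | hs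
    · simp only [min_eq_left hs, max_eq_right hs] at hu
      rw [abs_of_nonneg hu.1, abs_of_nonneg hs]; exact hu.2
    · simp only [min_eq_right hs, max_eq_left hs] at hu
      rw [abs_of_nonpos (hu.2.trans_eq rfl), abs_of_nonpos hs]
      exact neg_le_neg hu.1
  have hbound : ∀ u ∈ Ico (min 0 ξ) (max 0 ξ), ‖f' u‖ ≤ C * |ξ| ^ k := by
    intro u hu
    have h1 : |u| ≤ |ξ| := habs u ⟨hu.1, hu.2.le⟩
    calc ‖f' u‖ = |f' u| := rfl
      _ ≤ C * |u| ^ k := hb u (h1.trans hξ)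
      _ ≤ C * |ξ| ^ k := by
          exact mul_le_mul_of_nonneg_left (pow_le_pow_left₀ (abs_nonneg _) h1 k) hC
  have hder : ∀ u ∈ Icc (min 0 ξ) (max 0 ξ),
      HasDerivWithinAt f (f' u) (Icc (min 0 ξ) (max 0 ξ)) u :=
    fun u _ => (hd u).hasDerivWithinAt
  rcases le_total 0 ξ with hs | hs
  · have := norm_image_sub_le_of_norm_deriv_le_segment' hder hbound ξ
      (by simp [min_eq_left hs, max_eq_right hs, hs])
    rw [min_eq_left hs] at this
    simp only [hf0, sub_zero, Real.norm_eq_abs, sub_zero] at this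
    calc |f ξ| ≤ C * |ξ| ^ k * ξ := this
      _ = C * |ξ| ^ (k+1) := by rw [abs_of_nonneg hs]; ring
  · have := norm_image_sub_le_of_norm_deriv_le_segment' hder hbound 0
      (by simp [min_eq_right hs, max_eq_left hs, hs])
    rw [min_eq_right hs] at this
    simp only [hf0, Real.norm_eq_abs, zero_sub, abs_neg] at this
    calc |f ξ| ≤ C * |ξ| ^ k * -ξ := this
      _ = C * |ξ| ^ (k+1) := by rw [abs_of_nonpos hs]; ring

private lemma taylor4_bound {g0 g1 g2 g3 g4 : ℝ → ℝ}
    (d0 : ∀ x, HasDerivAt g0 (g1 x) x) (d1 : ∀ x, HasDerivAt g1 (g2 x) x)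
    (d2 : ∀ x, HasDerivAt g2 (g3 x) x) (d3 : ∀ x, HasDerivAt g3 (g4 x) x)
    (c4 : Continuous g4)
    (z0 : g0 0 = 0) (z1 : g1 0 = 0) (z2 : g2 0 = 0) (z3 : g3 0 = 0) (r : ℝ) :
    ∃ C : ℝ, 0 ≤ C ∧ ∀ ξ : ℝ, |ξ| ≤ r → |g0 ξ| ≤ C * ξ ^ 4 := by
  obtain ⟨C, hC⟩ := (isCompact_Icc (a := -r) (b := r)).exists_bound_of_continuousOn
    c4.continuousOn
  refine ⟨max C 0, le_max_right _ _, ?_⟩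
  have hC0 : (0:ℝ) ≤ max C 0 := le_max_right _ _
  have b4 : ∀ u : ℝ, |u| ≤ r → |g4 u| ≤ max C 0 * |u| ^ 0 := by
    intro u hu
    calc |g4 u| ≤ max C 0 := (hC u (abs_le.mp hu)).trans (le_max_left _ _)
      _ = max C 0 * |u| ^ 0 := by simp
  have b3 := mvt_step d3 z3 hC0 0 b4
  have b2 := mvt_step d2 z2 hC0 1 b3
  have b1 := mvt_step d1 z1 hC0 2 b2
  have b0 := mvt_step d0 z0 hC0 3 b1
  intro ξ hξ
  calc |g0 ξ| ≤ max C 0 * |ξ| ^ 4 := b0 ξ hξ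
    _ = max C 0 * ξ ^ 4 := by rw [pow_abs, abs_of_nonneg (by positivity)]

private lemma taylor2_bound {g0 g1 g2 : ℝ → ℝ}
    (d0 : ∀ x, HasDerivAt g0 (g1 x) x) (d1 : ∀ x, HasDerivAt g1 (g2 x) x)
    (c2 : Continuous g2)
    (z0 : g0 0 = 0) (z1 : g1 0 = 0) (r : ℝ) :
    ∃ C : ℝ, 0 ≤ C ∧ ∀ ξ : ℝ, |ξ| ≤ r → |g0 ξ| ≤ C * ξ ^ 2 := by
  obtain ⟨C, hC⟩ := (isCompact_Icc (a := -r) (b := r)).exists_bound_of_continuousOn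
    c2.continuousOn
  refine ⟨max C 0, le_max_right _ _, ?_⟩
  have hC0 : (0:ℝ) ≤ max C 0 := le_max_right _ _
  have b2 : ∀ u : ℝ, |u| ≤ r → |g2 u| ≤ max C 0 * |u| ^ 0 := by
    intro u hu
    calc |g2 u| ≤ max C 0 := (hC u (abs_le.mp hu)).trans (le_max_left _ _)
      _ = max C 0 * |u| ^ 0 := by simp
  have b1 := mvt_step d1 z1 hC0 0 b2
  have b0 := mvt_step d0 z0 hC0 1 b1
  intro ξ hξ
  calc |g0 ξ| ≤ max C 0 * |ξ| ^ 2 := b0 ξ hξ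
    _ = max C 0 * ξ ^ 2 := by rw [pow_abs, abs_of_nonneg (by positivity)]
private lemma sq_le_exp_aux (u : ℝ) (hu : 0 ≤ u) : u ^ 2 ≤ 4 * Real.exp u := by
  have h1 : u / 2 + 1 ≤ Real.exp (u / 2) := Real.add_one_le_exp _
  have h2 : Real.exp (u/2) * Real.exp (u/2) = Real.exp u := by
    rw [← Real.exp_add]; ring_nf
  nlinarith [Real.exp_pos (u/2)]

private lemma cube_le_exp_aux (u : ℝ) (hu : 0 ≤ u) : u ^ 3 ≤ 27 * Real.exp u := by
  have h1 : u / 3 + 1 ≤ Real.exp (u / 3) := Real.add_one_le_exp _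
  have h3 : u / 3 ≤ Real.exp (u / 3) := by linarith
  have h4 : (u/3) ^ 3 ≤ Real.exp (u/3) ^ 3 :=
    pow_le_pow_left₀ (by positivity) h3 3
  have h5 : Real.exp (u/3) ^ 3 = Real.exp u := by
    rw [← Real.exp_nat_mul]; norm_num; ring_nf
  nlinarith [h4, h5]

private lemma integrable_pow_mul_exp (n : ℕ) {b : ℝ} (hb : 0 < b) :
    Integrable (fun x : ℝ => x ^ n * Real.exp (-b * x ^ 2)) := by
  have := integrable_rpow_mul_exp_neg_mul_sq hb (s := (n:ℝ))
    (lt_of_lt_of_le (by norm_num) (Nat.cast_nonneg n))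
  simpa [Real.rpow_natCast] using this

private lemma tendsto_mul_exp_atTop {b : ℝ} (hb : 0 < b) :
    Tendsto (fun x : ℝ => x * Real.exp (-b * x ^ 2)) atTop (nhds 0) := by
  have h := (rpow_mul_exp_neg_mul_sq_isLittleO_exp_neg hb 1).isBigO
  have h2 : Tendsto (fun x : ℝ => Real.exp (-(1/2) * x)) atTop (nhds 0) := by
    apply Real.tendsto_exp_atBot.comp
    exact Tendsto.const_mul_atTop_of_neg (by norm_num) tendsto_id
  have := h.trans_tendsto h2
  simpa [Real.rpow_one] using this

private lemma tendsto_mul_exp_atBot {b : ℝ} (hb : 0 < b) :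
    Tendsto (fun x : ℝ => x * Real.exp (-b * x ^ 2)) atBot (nhds 0) := by
  have h1 : Tendsto (fun x : ℝ => -(x * Real.exp (-b * x ^ 2))) atTop (nhds 0) := by
    simpa using (tendsto_mul_exp_atTop hb).neg
  have h2 := h1.comp tendsto_neg_atBot_atTop
  convert h2 using 2 with x
  simp [Function.comp]

private lemma integral_sq_mul_exp {b : ℝ} (hb : 0 < b) :
    ∫ x : ℝ, x ^ 2 * Real.exp (-b * x ^ 2) = Real.sqrt (Real.pi / b) / (2 * b) := by
  set φ : ℝ → ℝ := fun x => x * Real.exp (-b * x ^ 2) with hφ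
  set ψ : ℝ → ℝ := fun x => Real.exp (-b * x ^ 2) - 2 * b * (x ^ 2 * Real.exp (-b * x ^ 2)) with hψ
  have hint0 : Integrable (fun x : ℝ => Real.exp (-b * x ^ 2)) := integrable_exp_neg_mul_sq hb
  have hint2 : Integrable (fun x : ℝ => x ^ 2 * Real.exp (-b * x ^ 2)) :=
    integrable_pow_mul_exp 2 hb
  have hψint : Integrable ψ := hint0.sub (hint2.const_mul (2*b))
  have hd : ∀ x : ℝ, HasDerivAt φ (ψ x) x := by
    intro x
    have h1 : HasDerivAt (fun y : ℝ => -b * y ^ 2) (-b * (2 * x)) x := by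
      simpa using ((hasDerivAt_pow 2 x).const_mul (-b))
    have h2 := ((hasDerivAt_id x).mul h1.exp)
    refine h2.congr_deriv ?_
    simp [hψ]; ring
  have htop : Tendsto φ atTop (nhds 0) := tendsto_mul_exp_atTop hb
  have hbot : Tendsto φ atBot (nhds 0) := tendsto_mul_exp_atBot hb
  have hIoi : ∫ x in Ioi (0:ℝ), ψ x = 0 - φ 0 :=
    integral_Ioi_of_hasDerivAt_of_tendsto (hd 0).continuousAt.continuousWithinAt
      (fun x _ => hd x) hψint.integrableOn htop
  have hIic : ∫ x in Iic (0:ℝ), ψ x = φ 0 - 0 :=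
    integral_Iic_of_hasDerivAt_of_tendsto (hd 0).continuousAt.continuousWithinAt
      (fun x _ => hd x) hψint.integrableOn hbot
  have htot : ∫ x : ℝ, ψ x = 0 := by
    rw [← intervalIntegral.integral_Iic_add_Ioi hψint.integrableOn hψint.integrableOn, hIoi, hIic]
    simp
  have hsplit : ∫ x : ℝ, ψ x
      = (∫ x : ℝ, Real.exp (-b * x ^ 2)) - 2 * b * ∫ x : ℝ, x ^ 2 * Real.exp (-b * x ^ 2) := by
    rw [hψ]
    rw [integral_sub hint0 (hint2.const_mul (2*b))]
    simp_rw [integral_const_mul]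
  rw [hsplit, integral_gaussian] at htot
  have hb' : (2*b) ≠ 0 := by positivity
  field_simp at htot ⊢
  linarith

private lemma integral_cube_mul_exp {b : ℝ} (hb : 0 < b) :
    ∫ x : ℝ, x ^ 3 * Real.exp (-b * x ^ 2) = 0 := by
  have h := integral_neg_eq_self (fun x : ℝ => x ^ 3 * Real.exp (-b * x ^ 2)) volume
  simp only [Odd.neg_pow (⟨1, by norm_num⟩ : Odd 3), neg_sq, neg_mul] at h
  have : ∫ x : ℝ, -(x ^ 3 * Real.exp (-b * x ^ 2)) = ∫ x : ℝ, x ^ 3 * Real.exp (-b * x ^ 2) := by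
    simpa using h
  rw [integral_neg] at this
  linarith



private lemma exp_split (t ξ : ℝ) (ht : t ≠ 0) :
    Real.exp (-(1/(4*t)) * ξ ^ 2)
      = Real.exp (-(1/(8*t)) * ξ ^ 2) * Real.exp (-(1/(8*t)) * ξ ^ 2) := by
  rw [← Real.exp_add]
  congr 1
  field_simp
  ring

private lemma bound4 (t : ℝ) (ht : 0 < t) (ξ : ℝ) :
    ξ ^ 4 * Real.exp (-(1/(4*t)) * ξ ^ 2)
      ≤ 256 * t ^ 2 * Real.exp (-(1/(8*t)) * ξ ^ 2) := by
  have hu0 : 0 ≤ ξ ^ 2 / (8 * t) := by positivity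
  have htne : t ≠ 0 := ht.ne'
  have hkey : ξ ^ 4 * Real.exp (-(1/(8*t)) * ξ ^ 2) ≤ 256 * t ^ 2 := by
    have hx : ξ ^ 4 = 64 * t ^ 2 * (ξ ^ 2 / (8 * t)) ^ 2 := by field_simp; ring
    have he : -(1/(8*t)) * ξ ^ 2 = -(ξ ^ 2 / (8 * t)) := by field_simp
    have hm := sq_le_exp_aux _ hu0
    rw [hx, he, Real.exp_neg, mul_inv_le_iff₀' (Real.exp_pos _)]
    calc 64 * t ^ 2 * (ξ ^ 2 / (8 * t)) ^ 2
        ≤ 64 * t ^ 2 * (4 * Real.exp (ξ ^ 2 / (8 * t))) :=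
          mul_le_mul_of_nonneg_left hm (by positivity)
      _ = Real.exp (ξ ^ 2 / (8 * t)) * (256 * t ^ 2) := by ring
  calc ξ ^ 4 * Real.exp (-(1/(4*t)) * ξ ^ 2)
      = (ξ ^ 4 * Real.exp (-(1/(8*t)) * ξ ^ 2)) * Real.exp (-(1/(8*t)) * ξ ^ 2) := by
        rw [exp_split t ξ htne]; ring
    _ ≤ 256 * t ^ 2 * Real.exp (-(1/(8*t)) * ξ ^ 2) :=
        mul_le_mul_of_nonneg_right hkey (Real.exp_pos _).le

private lemma bound6 (t : ℝ) (ht : 0 < t) (ξ : ℝ) :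
    ξ ^ 6 * Real.exp (-(1/(4*t)) * ξ ^ 2)
      ≤ 13824 * t ^ 3 * Real.exp (-(1/(8*t)) * ξ ^ 2) := by
  have hu0 : 0 ≤ ξ ^ 2 / (8 * t) := by positivity
  have htne : t ≠ 0 := ht.ne'
  have hkey : ξ ^ 6 * Real.exp (-(1/(8*t)) * ξ ^ 2) ≤ 13824 * t ^ 3 := by
    have hx : ξ ^ 6 = 512 * t ^ 3 * (ξ ^ 2 / (8 * t)) ^ 3 := by field_simp; ring
    have he : -(1/(8*t)) * ξ ^ 2 = -(ξ ^ 2 / (8 * t)) := by field_simp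
    have hm := cube_le_exp_aux _ hu0
    rw [hx, he, Real.exp_neg, mul_inv_le_iff₀' (Real.exp_pos _)]
    calc 512 * t ^ 3 * (ξ ^ 2 / (8 * t)) ^ 3
        ≤ 512 * t ^ 3 * (27 * Real.exp (ξ ^ 2 / (8 * t))) :=
          mul_le_mul_of_nonneg_left hm (by positivity)
      _ = Real.exp (ξ ^ 2 / (8 * t)) * (13824 * t ^ 3) := by ring
  calc ξ ^ 6 * Real.exp (-(1/(4*t)) * ξ ^ 2)
      = (ξ ^ 6 * Real.exp (-(1/(8*t)) * ξ ^ 2)) * Real.exp (-(1/(8*t)) * ξ ^ 2) := by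
        rw [exp_split t ξ htne]; ring
    _ ≤ 13824 * t ^ 3 * Real.exp (-(1/(8*t)) * ξ ^ 2) :=
        mul_le_mul_of_nonneg_right hkey (Real.exp_pos _).le

set_option maxHeartbeats 2000000 in
private lemma key_estimate (h : ℝ → ℝ) (hh : ContDiff ℝ (⊤ : ℕ∞) h) (h0 : h 0 = 0) (h0' : deriv h 0 = 0)
    (μ : ℝ → ℝ) (hμ : ContDiff ℝ (⊤ : ℕ∞) μ) (hμc : HasCompactSupport μ) :
    ∃ C : ℝ, 0 ≤ C ∧ ∀ t : ℝ, 0 < t →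
      |(∫ ξ : ℝ, ((h ξ - ξ * deriv h ξ) / (2 * t)) *
          (Real.exp (-(ξ ^ 2 + (h ξ) ^ 2) / (4 * t)) / (4 * Real.pi * t)) * μ ξ)
        + deriv (deriv h) 0 * μ 0 / (4 * Real.sqrt Real.pi) / Real.sqrt t|
        ≤ C * Real.sqrt t := by
  have hh' : ContDiff ℝ (↑(⊤:ℕ∞)) h := hh.of_le (by simp)
  have hμ' : ContDiff ℝ (↑(⊤:ℕ∞)) μ := hμ.of_le (by simp)
  have diffOf : ∀ {f : ℝ → ℝ}, ContDiff ℝ (↑(⊤:ℕ∞)) f → ∀ x : ℝ, HasDerivAt f (deriv f x) x :=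
    fun hf x => (hf.differentiable (by simp) x).hasDerivAt
  have derivSmooth : ∀ {f : ℝ → ℝ}, ContDiff ℝ (↑(⊤:ℕ∞)) f → ContDiff ℝ (↑(⊤:ℕ∞)) (deriv f) :=
    fun hf => (contDiff_infty_iff_deriv.mp hf).2
  set h1 := deriv h with hh1def
  set h2 := deriv h1 with hh2def
  have hh1 : ContDiff ℝ (↑(⊤:ℕ∞)) h1 := derivSmooth hh'
  have hh2 : ContDiff ℝ (↑(⊤:ℕ∞)) h2 := derivSmooth hh1
  have Dh : ∀ x : ℝ, HasDerivAt h (h1 x) x := diffOf hh'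
  have Dh1 : ∀ x : ℝ, HasDerivAt h1 (h2 x) x := diffOf hh1
  have Dh2 : ∀ x : ℝ, HasDerivAt h2 (deriv h2 x) x := diffOf hh2
  have Dμ : ∀ x : ℝ, HasDerivAt μ (deriv μ x) x := diffOf hμ'
  have Dμ1 : ∀ x : ℝ, HasDerivAt (deriv μ) (deriv (deriv μ) x) x := diffOf (derivSmooth hμ')
  -- the function G and its derivatives
  set G : ℝ → ℝ := fun ξ => (h ξ - ξ * h1 ξ) * μ ξ with hGdef
  have hG : ContDiff ℝ (↑(⊤:ℕ∞)) G := (hh'.sub (contDiff_id.mul hh1)).mul hμ'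
  have hG1 : ContDiff ℝ (↑(⊤:ℕ∞)) (deriv G) := derivSmooth hG
  have hG2 : ContDiff ℝ (↑(⊤:ℕ∞)) (deriv (deriv G)) := derivSmooth hG1
  have hG3 : ContDiff ℝ (↑(⊤:ℕ∞)) (deriv (deriv (deriv G))) := derivSmooth hG2
  have hG4 : ContDiff ℝ (↑(⊤:ℕ∞)) (deriv (deriv (deriv (deriv G)))) := derivSmooth hG3
  have DG : ∀ x : ℝ, HasDerivAt G (deriv G x) x := diffOf hG
  have DG1 : ∀ x : ℝ, HasDerivAt (deriv G) (deriv (deriv G) x) x := diffOf hG1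
  have DG2 : ∀ x : ℝ, HasDerivAt (deriv (deriv G)) (deriv (deriv (deriv G)) x) x := diffOf hG2
  have DG3 : ∀ x : ℝ, HasDerivAt (deriv (deriv (deriv G)))
      (deriv (deriv (deriv (deriv G))) x) x := diffOf hG3
  -- the explicit first derivative of G
  have DGexp : ∀ x : ℝ, HasDerivAt G ((-x * h2 x) * μ x + (h x - x * h1 x) * deriv μ x) x := by
    intro x
    have hp : HasDerivAt (fun ξ : ℝ => h ξ - ξ * h1 ξ) (h1 x - (1 * h1 x + x * h2 x)) x :=
      (Dh x).sub ((hasDerivAt_id x).mul (Dh1 x))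
    have := hp.mul (Dμ x)
    refine this.congr_deriv ?_
    ring
  have hderivG : deriv G = fun x => (-x * h2 x) * μ x + (h x - x * h1 x) * deriv μ x :=
    funext fun x => (DGexp x).deriv
  have hG0 : G 0 = 0 := by simp [hGdef, h0]
  have hG1_0 : deriv G 0 = 0 := by rw [hderivG]; simp [h0]
  have hG2_0 : deriv (deriv G) 0 = -(h2 0 * μ 0) := by
    rw [hderivG]
    have t1 : HasDerivAt (fun x : ℝ => (-x * h2 x) * μ x)
        (((-1) * h2 0 + (-0) * deriv h2 0) * μ 0 + (-0 * h2 0) * deriv μ 0) 0 :=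
      (((hasDerivAt_id 0).neg.mul (Dh2 0)).mul (Dμ 0))
    have t2 : HasDerivAt (fun x : ℝ => (h x - x * h1 x) * deriv μ x)
        ((h1 0 - (1 * h1 0 + 0 * h2 0)) * deriv μ 0 + (h 0 - 0 * h1 0) * deriv (deriv μ) 0) 0 :=
      ((Dh 0).sub ((hasDerivAt_id 0).mul (Dh1 0))).mul (Dμ1 0)
    have := (t1.add t2).deriv
    simp only [Pi.add_def] at this
    rw [this]
    simp [h0]
  -- Taylor coefficients
  set a : ℝ := deriv (deriv G) 0 / 2 with hadef
  set b : ℝ := deriv (deriv (deriv G)) 0 / 6 with hbdef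
  have haval : a = -(h2 0 * μ 0) / 2 := by rw [hadef, hG2_0]
  -- radius of support
  obtain ⟨r0, hr0⟩ := (hμc.isBounded).subset_closedBall 0
  set r : ℝ := max r0 1 with hrdef
  have hr1 : (1:ℝ) ≤ r := le_max_right _ _
  have hr0' : (0:ℝ) < r := lt_of_lt_of_le one_pos hr1
  have hμzero : ∀ ξ : ℝ, r < |ξ| → μ ξ = 0 := by
    intro ξ hξ
    by_contra hne
    have : ξ ∈ tsupport μ := subset_tsupport μ (by simpa [Function.mem_support] using hne)
    have := hr0 this
    rw [Metric.mem_closedBall, Real.dist_eq, sub_zero] at this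
    have : |ξ| ≤ r := this.trans (le_max_left _ _)
    linarith
  -- quartic Taylor bound for G
  obtain ⟨CT, hCT0, hCT⟩ := taylor4_bound
    (g0 := fun ξ => G ξ - (a * ξ ^ 2 + b * ξ ^ 3))
    (g1 := fun ξ => deriv G ξ - (2 * a * ξ + 3 * b * ξ ^ 2))
    (g2 := fun ξ => deriv (deriv G) ξ - (2 * a + 6 * b * ξ))
    (g3 := fun ξ => deriv (deriv (deriv G)) ξ - 6 * b)
    (g4 := deriv (deriv (deriv (deriv G))))
    (fun x => by
      have hp : HasDerivAt (fun ξ : ℝ => a * ξ ^ 2 + b * ξ ^ 3)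
          (2 * a * x + 3 * b * x ^ 2) x := by
        have := ((hasDerivAt_pow 2 x).const_mul a).add ((hasDerivAt_pow 3 x).const_mul b)
        refine this.congr_deriv ?_
        push_cast
        ring
      exact (DG x).sub hp)
    (fun x => by
      have hp : HasDerivAt (fun ξ : ℝ => 2 * a * ξ + 3 * b * ξ ^ 2)
          (2 * a + 6 * b * x) x := by
        have := ((hasDerivAt_id x).const_mul (2 * a)).add
          ((hasDerivAt_pow 2 x).const_mul (3 * b))
        refine this.congr_deriv ?_
        push_cast
        ring
      exact (DG1 x).sub hp)
    (fun x => by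
      have hp : HasDerivAt (fun ξ : ℝ => 2 * a + 6 * b * ξ) (6 * b) x := by
        exact ((hasDerivAt_const x (2*a)).add ((hasDerivAt_id x).const_mul (6 * b))).congr_deriv (by simp)
      exact (DG2 x).sub hp)
    (fun x => by exact ((DG3 x).sub (hasDerivAt_const x (6 * b))).congr_deriv (by simp))
    (hG4.continuous)
    (by simp [hG0]) (by simp [hG1_0]) (by simp [hadef]; ring) (by simp [hbdef]; ring)
    r
  -- quadratic Taylor bound for h
  obtain ⟨M, hM0, hM⟩ := taylor2_bound Dh Dh1 hh2.continuous h0 h0' r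
  -- constants
  set c : ℝ := h2 0 * μ 0 with hcdef
  have haval : a = -c / 2 := by rw [hadef, hG2_0]
  set CT' : ℝ := CT + (|a| + |b|) with hCT'def
  set C6 : ℝ := (|a| + |b| * r) * M ^ 2 / 4 with hC6def
  have hCT'0 : 0 ≤ CT' := by
    rw [hCT'def]; have := abs_nonneg a; have := abs_nonneg b; linarith
  have hC60 : 0 ≤ C6 := by
    rw [hC6def]
    apply div_nonneg _ (by norm_num)
    apply mul_nonneg _ (sq_nonneg M)
    have := abs_nonneg a
    have := mul_nonneg (abs_nonneg b) hr0'.le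
    linarith
  set Cfin : ℝ := (256 * CT' + 13824 * C6) * Real.sqrt (8 * Real.pi) / (8 * Real.pi) with hCfin
  have hCfin0 : 0 ≤ Cfin := by
    rw [hCfin]
    apply div_nonneg _ (by positivity)
    apply mul_nonneg _ (Real.sqrt_nonneg _)
    linarith
  refine ⟨Cfin, hCfin0, ?_⟩
  intro t ht
  have htne : t ≠ 0 := ht.ne'
  have ht4 : (0:ℝ) < 1/(4*t) := by positivity
  have ht8 : (0:ℝ) < 1/(8*t) := by positivity
  set E0 : ℝ → ℝ := fun ξ => Real.exp (-(1/(4*t)) * ξ ^ 2) with hE0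
  set f1 : ℝ → ℝ := fun ξ => G ξ * Real.exp (-(ξ ^ 2 + h ξ ^ 2) / (4 * t)) with hf1
  set f2 : ℝ → ℝ := fun ξ => a * (ξ ^ 2 * E0 ξ) + b * (ξ ^ 3 * E0 ξ) with hf2
  -- rewrite the integrand
  have hrw : (∫ ξ : ℝ, ((h ξ - ξ * h1 ξ) / (2 * t)) *
      (Real.exp (-(ξ ^ 2 + (h ξ) ^ 2) / (4 * t)) / (4 * Real.pi * t)) * μ ξ)
      = (∫ ξ : ℝ, f1 ξ) / (8 * Real.pi * t ^ 2) := by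
    rw [← integral_div]
    congr 1
    funext ξ
    rw [hf1, hGdef]
    have hπ := Real.pi_ne_zero
    field_simp
    ring
  -- integrability
  have hGc : HasCompactSupport G := by
    rw [hGdef]
    exact HasCompactSupport.mul_left hμc
  have hcontExp : Continuous fun ξ : ℝ => Real.exp (-(ξ ^ 2 + h ξ ^ 2) / (4 * t)) := by
    apply Real.continuous_exp.comp
    exact (((continuous_pow 2).add ((hh'.continuous).pow 2)).neg).div_const _
  have hf1c : Continuous f1 := (hG.continuous).mul hcontExp
  have hf1supp : HasCompactSupport f1 := by
    rw [hf1]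
    exact HasCompactSupport.mul_right hGc
  have hf1i : Integrable f1 := hf1c.integrable_of_hasCompactSupport hf1supp
  have hi2 : Integrable (fun ξ : ℝ => ξ ^ 2 * E0 ξ) := integrable_pow_mul_exp 2 ht4
  have hi3 : Integrable (fun ξ : ℝ => ξ ^ 3 * E0 ξ) := integrable_pow_mul_exp 3 ht4
  have hi4 : Integrable (fun ξ : ℝ => ξ ^ 4 * E0 ξ) := integrable_pow_mul_exp 4 ht4
  have hi6 : Integrable (fun ξ : ℝ => ξ ^ 6 * E0 ξ) := integrable_pow_mul_exp 6 ht4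
  have hf2i : Integrable f2 := (hi2.const_mul a).add (hi3.const_mul b)
  have hf2val : ∫ ξ : ℝ, f2 ξ
      = a * (Real.sqrt (Real.pi/(1/(4*t)))/(2*(1/(4*t)))) := by
    rw [hf2, integral_add (hi2.const_mul a) (hi3.const_mul b)]
    simp_rw [integral_const_mul]
    rw [integral_sq_mul_exp ht4, integral_cube_mul_exp ht4]
    ring
  set R : ℝ → ℝ := fun ξ => f1 ξ - f2 ξ with hRdef
  have hRi : Integrable R := hf1i.sub hf2i
  have hsplitf : ∫ ξ : ℝ, f1 ξ = (∫ ξ : ℝ, f2 ξ) + ∫ ξ : ℝ, R ξ := by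
    rw [← integral_add hf2i hRi]
    congr 1
    funext ξ
    simp [hRdef]
  -- pointwise bound on R
  set gbd : ℝ → ℝ := fun ξ => CT' * (ξ ^ 4 * E0 ξ) + C6 / t * (ξ ^ 6 * E0 ξ) with hgbd
  have hE1le : ∀ ξ : ℝ, Real.exp (-(ξ ^ 2 + h ξ ^ 2) / (4 * t)) ≤ E0 ξ := by
    intro ξ
    rw [hE0]
    apply Real.exp_le_exp.mpr
    rw [show -(1/(4*t)) * ξ ^ 2 = -(ξ ^ 2) / (4*t) by field_simp]
    apply div_le_div_of_nonneg_right ?_ (by positivity)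
    nlinarith [sq_nonneg (h ξ)]
  have hpoint : ∀ ξ : ℝ, |R ξ| ≤ gbd ξ := by
    intro ξ
    have hEpos : 0 < E0 ξ := Real.exp_pos _
    have habs3 : |ξ ^ 3| = |ξ| * ξ ^ 2 := by
      rw [show ξ ^ 3 = ξ * ξ ^ 2 by ring, abs_mul,
        abs_of_nonneg (by positivity : (0:ℝ) ≤ ξ ^ 2)]
    have hE1pos : 0 < Real.exp (-(ξ ^ 2 + h ξ ^ 2) / (4 * t)) := Real.exp_pos _
    rcases le_or_gt |ξ| r with hcase | hcase
    · -- inside the support region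
      have hT := hCT ξ hcase
      have hhb := hM ξ hcase
      have hsq : h ξ ^ 2 ≤ M ^ 2 * ξ ^ 4 := by
        have h1 : |h ξ| ^ 2 ≤ (M * ξ ^ 2) ^ 2 := pow_le_pow_left₀ (abs_nonneg _) hhb 2
        rw [sq_abs] at h1
        calc h ξ ^ 2 ≤ (M * ξ ^ 2) ^ 2 := h1
          _ = M ^ 2 * ξ ^ 4 := by ring
      have hE1 : Real.exp (-(ξ ^ 2 + h ξ ^ 2) / (4 * t))
          = E0 ξ * Real.exp (-(h ξ ^ 2 / (4 * t))) := by
        rw [hE0, ← Real.exp_add]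
        congr 1
        field_simp
        ring
      have hexp1 : 1 - Real.exp (-(h ξ ^ 2 / (4 * t))) ≤ h ξ ^ 2 / (4 * t) := by
        have := Real.add_one_le_exp (-(h ξ ^ 2 / (4 * t)))
        linarith
      have hexp0 : Real.exp (-(h ξ ^ 2 / (4 * t))) ≤ 1 :=
        Real.exp_le_one_iff.mpr (neg_nonpos.mpr (by positivity))
      have hdiff : E0 ξ - Real.exp (-(ξ ^ 2 + h ξ ^ 2) / (4 * t))
          ≤ E0 ξ * (M ^ 2 * ξ ^ 4 / (4 * t)) := by
        rw [hE1]
        have step1 : E0 ξ - E0 ξ * Real.exp (-(h ξ ^ 2 / (4 * t)))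
            = E0 ξ * (1 - Real.exp (-(h ξ ^ 2 / (4 * t)))) := by ring
        rw [step1]
        apply mul_le_mul_of_nonneg_left _ hEpos.le
        apply hexp1.trans
        apply div_le_div_of_nonneg_right _ (by positivity)
        exact hsq
      have hdecomp : R ξ = (G ξ - (a * ξ ^ 2 + b * ξ ^ 3)) * Real.exp (-(ξ ^ 2 + h ξ ^ 2) / (4 * t))
          + (a * ξ ^ 2 + b * ξ ^ 3) * (Real.exp (-(ξ ^ 2 + h ξ ^ 2) / (4 * t)) - E0 ξ) := by
        simp only [hRdef, hf1, hf2]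
        ring
      have hp_abs : |a * ξ ^ 2 + b * ξ ^ 3| ≤ (|a| + |b| * r) * ξ ^ 2 := by
        calc |a * ξ ^ 2 + b * ξ ^ 3| ≤ |a * ξ ^ 2| + |b * ξ ^ 3| := abs_add_le _ _
          _ = |a| * ξ ^ 2 + |b| * (|ξ| * ξ ^ 2) := by
              rw [abs_mul, abs_mul, habs3,
                abs_of_nonneg (by positivity : (0:ℝ) ≤ ξ ^ 2)]
          _ ≤ (|a| + |b| * r) * ξ ^ 2 := by
              have h1 : |b| * (|ξ| * ξ ^ 2) ≤ |b| * (r * ξ ^ 2) := by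
                apply mul_le_mul_of_nonneg_left _ (abs_nonneg b)
                apply mul_le_mul_of_nonneg_right hcase (by positivity)
              have h2 : (|a| + |b| * r) * ξ ^ 2
                  = |a| * ξ ^ 2 + |b| * (r * ξ ^ 2) := by ring
              linarith
      have b1 : |(G ξ - (a * ξ ^ 2 + b * ξ ^ 3)) * Real.exp (-(ξ ^ 2 + h ξ ^ 2) / (4 * t))|
          ≤ CT * (ξ ^ 4 * E0 ξ) := by
        rw [abs_mul, abs_of_pos hE1pos]
        calc |G ξ - (a * ξ ^ 2 + b * ξ ^ 3)| * Real.exp (-(ξ ^ 2 + h ξ ^ 2) / (4 * t))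
            ≤ (CT * ξ ^ 4) * E0 ξ :=
              mul_le_mul hT (hE1le ξ) hE1pos.le (by positivity)
          _ = CT * (ξ ^ 4 * E0 ξ) := by ring
      have b2 : |(a * ξ ^ 2 + b * ξ ^ 3) * (Real.exp (-(ξ ^ 2 + h ξ ^ 2) / (4 * t)) - E0 ξ)|
          ≤ C6 / t * (ξ ^ 6 * E0 ξ) := by
        rw [abs_mul]
        have habs2 : |Real.exp (-(ξ ^ 2 + h ξ ^ 2) / (4 * t)) - E0 ξ|
            ≤ E0 ξ * (M ^ 2 * ξ ^ 4 / (4 * t)) := by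
          rw [abs_sub_comm, abs_of_nonneg (by linarith [hE1le ξ])]
          exact hdiff
        calc |a * ξ ^ 2 + b * ξ ^ 3| * |Real.exp (-(ξ ^ 2 + h ξ ^ 2) / (4 * t)) - E0 ξ|
            ≤ ((|a| + |b| * r) * ξ ^ 2) * (E0 ξ * (M ^ 2 * ξ ^ 4 / (4 * t))) := by
              apply mul_le_mul hp_abs habs2 (abs_nonneg _) (by positivity)
          _ = C6 / t * (ξ ^ 6 * E0 ξ) := by
              rw [hC6def]
              field_simp
      calc |R ξ| ≤ |(G ξ - (a * ξ ^ 2 + b * ξ ^ 3)) * Real.exp (-(ξ ^ 2 + h ξ ^ 2) / (4 * t))|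
            + |(a * ξ ^ 2 + b * ξ ^ 3) * (Real.exp (-(ξ ^ 2 + h ξ ^ 2) / (4 * t)) - E0 ξ)| := by
              rw [hdecomp]; exact abs_add_le _ _
        _ ≤ CT * (ξ ^ 4 * E0 ξ) + C6 / t * (ξ ^ 6 * E0 ξ) := add_le_add b1 b2
        _ ≤ gbd ξ := by
            rw [hgbd, hCT'def]
            have h1 : 0 ≤ ξ ^ 4 * E0 ξ := by positivity
            have h2 := mul_nonneg (add_nonneg (abs_nonneg a) (abs_nonneg b)) h1
            have h3 : (CT + (|a| + |b|)) * (ξ ^ 4 * E0 ξ)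
                = CT * (ξ ^ 4 * E0 ξ) + (|a| + |b|) * (ξ ^ 4 * E0 ξ) := by ring
            linarith
    · -- outside the support
      have hμ0 : μ ξ = 0 := hμzero ξ hcase
      have hG0' : G ξ = 0 := by rw [hGdef]; simp [hμ0]
      have hRform : R ξ = -((a * ξ ^ 2 + b * ξ ^ 3) * E0 ξ) := by
        simp only [hRdef, hf1, hf2, hG0']
        ring
      have h1ξ : 1 ≤ |ξ| := hr1.trans hcase.le
      have hξsq1 : 1 ≤ ξ ^ 2 := by
        calc (1:ℝ) = 1 * 1 := by ring
          _ ≤ |ξ| * |ξ| := mul_le_mul h1ξ h1ξ zero_le_one (abs_nonneg ξ)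
          _ = ξ ^ 2 := by rw [← sq_abs]; ring
      have habssq : |ξ| ≤ ξ ^ 2 := by
        calc |ξ| = 1 * |ξ| := by ring
          _ ≤ |ξ| * |ξ| := mul_le_mul_of_nonneg_right h1ξ (abs_nonneg ξ)
          _ = ξ ^ 2 := by rw [← sq_abs]; ring
      have hsq4 : ξ ^ 2 ≤ ξ ^ 4 := by
        calc ξ ^ 2 = 1 * ξ ^ 2 := by ring
          _ ≤ ξ ^ 2 * ξ ^ 2 := mul_le_mul_of_nonneg_right hξsq1 (sq_nonneg ξ)
          _ = ξ ^ 4 := by ring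
      have hcube4 : |ξ| * ξ ^ 2 ≤ ξ ^ 4 := by
        calc |ξ| * ξ ^ 2 ≤ ξ ^ 2 * ξ ^ 2 := mul_le_mul_of_nonneg_right habssq (sq_nonneg ξ)
          _ = ξ ^ 4 := by ring
      have hp_abs : |a * ξ ^ 2 + b * ξ ^ 3| ≤ (|a| + |b|) * ξ ^ 4 := by
        calc |a * ξ ^ 2 + b * ξ ^ 3| ≤ |a * ξ ^ 2| + |b * ξ ^ 3| := abs_add_le _ _
          _ = |a| * ξ ^ 2 + |b| * (|ξ| * ξ ^ 2) := by
              rw [abs_mul, abs_mul, habs3,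
                abs_of_nonneg (by positivity : (0:ℝ) ≤ ξ ^ 2)]
          _ ≤ (|a| + |b|) * ξ ^ 4 := by
              have h2 : |a| * ξ ^ 2 ≤ |a| * ξ ^ 4 :=
                mul_le_mul_of_nonneg_left hsq4 (abs_nonneg a)
              have h3 : |b| * (|ξ| * ξ ^ 2) ≤ |b| * ξ ^ 4 :=
                mul_le_mul_of_nonneg_left hcube4 (abs_nonneg b)
              have h4 : (|a| + |b|) * ξ ^ 4 = |a| * ξ ^ 4 + |b| * ξ ^ 4 := by ring
              linarith
      rw [hRform, abs_neg, abs_mul, abs_of_pos hEpos]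
      calc |a * ξ ^ 2 + b * ξ ^ 3| * E0 ξ ≤ ((|a| + |b|) * ξ ^ 4) * E0 ξ :=
            mul_le_mul_of_nonneg_right hp_abs hEpos.le
        _ ≤ gbd ξ := by
            rw [hgbd, hCT'def]
            have h1 : 0 ≤ ξ ^ 6 * E0 ξ := by positivity
            have h2 : 0 ≤ C6 / t := div_nonneg hC60 ht.le
            have h3 : 0 ≤ CT * (ξ ^ 4 * E0 ξ) := mul_nonneg hCT0 (by positivity)
            have h4 : 0 ≤ C6 / t * (ξ ^ 6 * E0 ξ) := mul_nonneg h2 h1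
            have h5 : ((|a| + |b|) * ξ ^ 4) * E0 ξ = (|a| + |b|) * (ξ ^ 4 * E0 ξ) := by ring
            have h6 : (CT + (|a| + |b|)) * (ξ ^ 4 * E0 ξ)
                = CT * (ξ ^ 4 * E0 ξ) + (|a| + |b|) * (ξ ^ 4 * E0 ξ) := by ring
            linarith
  -- integral bounds on the tails
  have hb4 : ∀ ξ : ℝ, ξ ^ 4 * E0 ξ ≤ 256 * t ^ 2 * Real.exp (-(1/(8*t)) * ξ ^ 2) := by
    intro ξ
    simp only [hE0]
    exact bound4 t ht ξ
  have hb6 : ∀ ξ : ℝ, ξ ^ 6 * E0 ξ ≤ 13824 * t ^ 3 * Real.exp (-(1/(8*t)) * ξ ^ 2) := by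
    intro ξ
    simp only [hE0]
    exact bound6 t ht ξ
  have hint4 : (∫ ξ : ℝ, ξ ^ 4 * E0 ξ) ≤ 256 * t ^ 2 * Real.sqrt (Real.pi / (1/(8*t))) := by
    calc (∫ ξ : ℝ, ξ ^ 4 * E0 ξ)
        ≤ ∫ ξ : ℝ, 256 * t ^ 2 * Real.exp (-(1/(8*t)) * ξ ^ 2) :=
          integral_mono hi4 ((integrable_exp_neg_mul_sq ht8).const_mul _) hb4
      _ = 256 * t ^ 2 * Real.sqrt (Real.pi / (1/(8*t))) := by
          rw [integral_const_mul, integral_gaussian]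
  have hint6 : (∫ ξ : ℝ, ξ ^ 6 * E0 ξ) ≤ 13824 * t ^ 3 * Real.sqrt (Real.pi / (1/(8*t))) := by
    calc (∫ ξ : ℝ, ξ ^ 6 * E0 ξ)
        ≤ ∫ ξ : ℝ, 13824 * t ^ 3 * Real.exp (-(1/(8*t)) * ξ ^ 2) :=
          integral_mono hi6 ((integrable_exp_neg_mul_sq ht8).const_mul _) hb6
      _ = 13824 * t ^ 3 * Real.sqrt (Real.pi / (1/(8*t))) := by
          rw [integral_const_mul, integral_gaussian]
  have hgbdi : Integrable gbd := (hi4.const_mul CT').add (hi6.const_mul (C6/t))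
  have hRbd : |∫ ξ : ℝ, R ξ| ≤ CT' * (256 * t ^ 2 * Real.sqrt (Real.pi / (1/(8*t))))
      + C6 / t * (13824 * t ^ 3 * Real.sqrt (Real.pi / (1/(8*t)))) := by
    have h1 : |∫ ξ : ℝ, R ξ| ≤ ∫ ξ : ℝ, gbd ξ := by
      rw [← Real.norm_eq_abs]
      apply norm_integral_le_of_norm_le hgbdi
      filter_upwards with ξ
      rw [Real.norm_eq_abs]
      exact hpoint ξ
    have h2 : (∫ ξ : ℝ, gbd ξ)
        = CT' * (∫ ξ : ℝ, ξ ^ 4 * E0 ξ) + C6/t * (∫ ξ : ℝ, ξ ^ 6 * E0 ξ) := by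
      simp only [hgbd]
      rw [integral_add (hi4.const_mul CT') (hi6.const_mul (C6/t))]
      simp_rw [integral_const_mul]
    have h3 := mul_le_mul_of_nonneg_left hint4 hCT'0
    have h4 := mul_le_mul_of_nonneg_left hint6 (div_nonneg hC60 ht.le)
    calc |∫ ξ : ℝ, R ξ| ≤ ∫ ξ : ℝ, gbd ξ := h1
      _ = CT' * (∫ ξ : ℝ, ξ ^ 4 * E0 ξ) + C6/t * (∫ ξ : ℝ, ξ ^ 6 * E0 ξ) := h2
      _ ≤ _ := add_le_add h3 h4
  -- final algebra
  set s : ℝ := Real.sqrt t with hs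
  have hs0 : 0 < s := Real.sqrt_pos.mpr ht
  set sπ : ℝ := Real.sqrt Real.pi with hsπ
  have hsπ0 : 0 < sπ := Real.sqrt_pos.mpr Real.pi_pos
  have hs2 : s ^ 2 = t := Real.sq_sqrt ht.le
  have hsπ2 : sπ ^ 2 = Real.pi := Real.sq_sqrt Real.pi_pos.le
  have hS8 : Real.sqrt (Real.pi / (1/(8*t))) = Real.sqrt (8*Real.pi) * s := by
    rw [show Real.pi / (1/(8*t)) = (8*Real.pi) * t by field_simp, hs]
    exact Real.sqrt_mul (by positivity) t
  have hS4 : Real.sqrt (Real.pi / (1/(4*t))) = 2 * sπ * s := by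
    rw [show Real.pi / (1/(4*t)) = (2*sπ*s)^2 by
      rw [mul_pow, mul_pow, hs2, hsπ2]; field_simp; ring]
    exact Real.sqrt_sq (by positivity)
  have hgoal_eq : (a * (Real.sqrt (Real.pi/(1/(4*t)))/(2*(1/(4*t)))) + ∫ ξ : ℝ, R ξ)
        / (8*Real.pi*t^2) + c / (4*sπ) / s
      = (∫ ξ : ℝ, R ξ) / (8*Real.pi*t^2) := by
    rw [hS4, haval, ← hs2, ← hsπ2]
    field_simp
    ring
  rw [hrw, hsplitf, hf2val, hgoal_eq]
  rw [abs_div, abs_of_pos (by positivity : (0:ℝ) < 8*Real.pi*t^2)]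
  rw [div_le_iff₀ (by positivity)]
  calc |∫ ξ : ℝ, R ξ|
      ≤ CT' * (256 * t ^ 2 * (Real.sqrt (8*Real.pi) * s))
        + C6 / t * (13824 * t ^ 3 * (Real.sqrt (8*Real.pi) * s)) := by
        rw [← hS8]; exact hRbd
    _ = Cfin * s * (8*Real.pi*t^2) := by
        rw [hCfin]
        field_simp


/-- On-surface asymptotics of the local double layer heat potential at the origin of a
boundary curve `x₂ = h(x₁)` tangent to the horizontal axis there (bounding the region
above the graph, outward unnormalized normal `n(ξ) = (h'(ξ), -1)`):
`D_L(δ) = -√δ h''(0) μ(0)/(2√π) + O(δ^{3/2})`. -/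
theorem local_double_layer_on_surface_asymptotics
    (h : ℝ → ℝ) (hh : ContDiff ℝ (⊤ : ℕ∞) h) (h0 : h 0 = 0) (h0' : deriv h 0 = 0)
    (μ : ℝ → ℝ) (hμ : ContDiff ℝ (⊤ : ℕ∞) μ) (hμc : HasCompactSupport μ) :
    ∃ C > (0:ℝ), ∃ δ₀ > (0:ℝ), ∀ δ : ℝ, 0 < δ → δ ≤ δ₀ →
      |(∫ t in (0:ℝ)..δ, ∫ ξ : ℝ,
          ((h ξ - ξ * deriv h ξ) / (2 * t)) *
            (Real.exp (-(ξ ^ 2 + (h ξ) ^ 2) / (4 * t)) / (4 * Real.pi * t)) * μ ξ)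
        + Real.sqrt δ * deriv (deriv h) 0 * μ 0 / (2 * Real.sqrt Real.pi)|
        ≤ C * δ ^ ((3:ℝ)/2) := by
  obtain ⟨C, hC0, hkey⟩ := key_estimate h hh h0 h0' μ hμ hμc
  set F : ℝ → ℝ := fun t => ∫ ξ : ℝ,
      ((h ξ - ξ * deriv h ξ) / (2 * t)) *
        (Real.exp (-(ξ ^ 2 + (h ξ) ^ 2) / (4 * t)) / (4 * Real.pi * t)) * μ ξ with hF
  set K : ℝ := deriv (deriv h) 0 * μ 0 / (4 * Real.sqrt Real.pi) with hK
  refine ⟨C + 1, by linarith, 1, one_pos, ?_⟩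
  intro δ hδ hδ1
  -- measurability of F
  have hFsm : StronglyMeasurable F := by
    rw [hF]
    apply StronglyMeasurable.integral_prod_right'
      (f := fun p : ℝ × ℝ => ((h p.2 - p.2 * deriv h p.2) / (2 * p.1)) *
        (Real.exp (-(p.2 ^ 2 + (h p.2) ^ 2) / (4 * p.1)) / (4 * Real.pi * p.1)) * μ p.2)
    apply Measurable.stronglyMeasurable
    have hhc : Continuous h := hh.continuous
    have hh1c : Continuous (deriv h) := (contDiff_infty_iff_deriv.mp (hh.of_le (by simp))).2.continuous
    have hμcity : Continuous μ := hμ.continuous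
    have m1 : Measurable fun p : ℝ × ℝ => (h p.2 - p.2 * deriv h p.2) / (2 * p.1) :=
      ((hhc.comp continuous_snd).sub
        (continuous_snd.mul (hh1c.comp continuous_snd))).measurable.div
        (continuous_const.mul continuous_fst : Continuous fun p : ℝ × ℝ => 2 * p.1).measurable
    have m2 : Measurable fun p : ℝ × ℝ =>
        Real.exp (-(p.2 ^ 2 + (h p.2) ^ 2) / (4 * p.1)) / (4 * Real.pi * p.1) := by
      apply Measurable.div
      · apply (Real.continuous_exp.measurable).comp
        exact (((continuous_snd.pow 2).add ((hhc.comp continuous_snd).pow 2)).neg).measurable.div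
          (continuous_const.mul continuous_fst : Continuous fun p : ℝ × ℝ => 4 * p.1).measurable
      · exact (continuous_const.mul continuous_fst : Continuous fun p : ℝ × ℝ => (4 * Real.pi) * p.1).measurable
    exact (m1.mul m2).mul (hμcity.comp continuous_snd).measurable
  -- the comparison function
  have hg : IntervalIntegrable (fun t : ℝ => t ^ (-(1:ℝ)/2)) volume 0 δ :=
    intervalIntegral.intervalIntegrable_rpow' (by norm_num)
  have hrpow_eq : ∀ t : ℝ, 0 < t → t ^ (-(1:ℝ)/2) = (Real.sqrt t)⁻¹ := by
    intro t ht
    rw [show (-(1:ℝ)/2) = -(1/2) by norm_num, Real.rpow_neg ht.le, Real.sqrt_eq_rpow]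
  -- interval integrability of F
  have hFi : IntervalIntegrable F volume 0 δ := by
    apply (hg.const_mul (C + |K|)).mono_fun hFsm.aestronglyMeasurable
    rw [Set.uIoc_of_le hδ.le]
    filter_upwards [ae_restrict_mem measurableSet_Ioc] with t htm
    have ht : 0 < t := htm.1
    have hst : 0 < Real.sqrt t := Real.sqrt_pos.mpr ht
    have hkt := hkey t ht
    have h1 : Real.sqrt t * Real.sqrt t ≤ 1 := by
      rw [Real.mul_self_sqrt ht.le]
      exact htm.2.trans hδ1
    have h2 : Real.sqrt t ≤ (Real.sqrt t)⁻¹ := by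
      rw [← one_div, le_div_iff₀ hst]
      exact h1
    have h3 : |F t| ≤ C * Real.sqrt t + |K| * (Real.sqrt t)⁻¹ := by
      have h4 : |F t| - |K / Real.sqrt t| ≤ |F t + K / Real.sqrt t| := by
        have := abs_add_le (F t + K / Real.sqrt t) (-(K / Real.sqrt t))
        simp only [add_neg_cancel_right, abs_neg] at this
        linarith
      have h5 : |K / Real.sqrt t| = |K| * (Real.sqrt t)⁻¹ := by
        rw [abs_div, abs_of_pos hst, div_eq_mul_inv]
      linarith [hkt, h4, h5.le, h5.ge]
    rw [Real.norm_eq_abs, Real.norm_eq_abs]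
    have h6 : C * Real.sqrt t ≤ C * (Real.sqrt t)⁻¹ := mul_le_mul_of_nonneg_left h2 hC0
    have h7 : |(C + |K|) * t ^ (-(1:ℝ)/2)| = (C + |K|) * (Real.sqrt t)⁻¹ := by
      rw [hrpow_eq t ht, abs_mul, abs_of_nonneg (add_nonneg hC0 (abs_nonneg K)),
        abs_of_pos (inv_pos.mpr hst)]
    rw [h7]
    calc |F t| ≤ C * Real.sqrt t + |K| * (Real.sqrt t)⁻¹ := h3
      _ ≤ C * (Real.sqrt t)⁻¹ + |K| * (Real.sqrt t)⁻¹ := by linarith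
      _ = (C + |K|) * (Real.sqrt t)⁻¹ := by ring
  -- split off the main term
  have hgK : IntervalIntegrable (fun t : ℝ => K * t ^ (-(1:ℝ)/2)) volume 0 δ := hg.const_mul K
  have hsum := intervalIntegral.integral_add hFi hgK
  have hri : ∫ t in (0:ℝ)..δ, t ^ (-(1:ℝ)/2) = 2 * Real.sqrt δ := by
    rw [integral_rpow (Or.inl (by norm_num))]
    rw [show (-(1:ℝ)/2 + 1) = 1/2 by norm_num]
    rw [Real.zero_rpow (by norm_num), Real.sqrt_eq_rpow]
    ring
  have hKi : ∫ t in (0:ℝ)..δ, K * t ^ (-(1:ℝ)/2) = K * (2 * Real.sqrt δ) := by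
    rw [intervalIntegral.integral_const_mul, hri]
  -- bound on the error integral
  have herr : |∫ t in (0:ℝ)..δ, (F t + K * t ^ (-(1:ℝ)/2))| ≤ C * Real.sqrt δ * δ := by
    have hb : ∀ t ∈ Set.uIoc (0:ℝ) δ, ‖F t + K * t ^ (-(1:ℝ)/2)‖ ≤ C * Real.sqrt δ := by
      intro t htm
      rw [Set.uIoc_of_le hδ.le] at htm
      have ht : 0 < t := htm.1
      have hkt := hkey t ht
      have heq : K * t ^ (-(1:ℝ)/2) = K / Real.sqrt t := by
        rw [hrpow_eq t ht, div_eq_mul_inv]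
      rw [Real.norm_eq_abs, heq]
      apply hkt.trans
      exact mul_le_mul_of_nonneg_left (Real.sqrt_le_sqrt htm.2) hC0
    have h2 := intervalIntegral.norm_integral_le_of_norm_le_const hb
    rw [Real.norm_eq_abs] at h2
    calc |∫ t in (0:ℝ)..δ, (F t + K * t ^ (-(1:ℝ)/2))|
        ≤ C * Real.sqrt δ * |δ - 0| := h2
      _ = C * Real.sqrt δ * δ := by rw [sub_zero, abs_of_pos hδ]
  -- assemble
  have hFsplit : (∫ t in (0:ℝ)..δ, F t)
      = (∫ t in (0:ℝ)..δ, (F t + K * t ^ (-(1:ℝ)/2))) - K * (2 * Real.sqrt δ) := by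
    rw [hKi] at hsum
    linarith
  have hgoal : (∫ t in (0:ℝ)..δ, F t)
        + Real.sqrt δ * deriv (deriv h) 0 * μ 0 / (2 * Real.sqrt Real.pi)
      = ∫ t in (0:ℝ)..δ, (F t + K * t ^ (-(1:ℝ)/2)) := by
    rw [hFsplit, hK]
    have hsπ : Real.sqrt Real.pi ≠ 0 := ne_of_gt (Real.sqrt_pos.mpr Real.pi_pos)
    ring
  rw [hgoal]
  have hd32 : δ ^ ((3:ℝ)/2) = δ * Real.sqrt δ := by
    rw [Real.sqrt_eq_rpow, show (3:ℝ)/2 = 1 + 1/2 by norm_num, Real.rpow_add hδ, Real.rpow_one]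
  calc |∫ t in (0:ℝ)..δ, (F t + K * t ^ (-(1:ℝ)/2))|
      ≤ C * Real.sqrt δ * δ := herr
    _ ≤ (C + 1) * δ ^ ((3:ℝ)/2) := by
        rw [hd32]
        have h8 : (0:ℝ) ≤ δ * Real.sqrt δ := by positivity
        calc C * Real.sqrt δ * δ = C * (δ * Real.sqrt δ) := by ring
          _ ≤ (C + 1) * (δ * Real.sqrt δ) :=
              mul_le_mul_of_nonneg_right (by linarith) h8
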